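/- arXiv:1905.08075 — 7 statements merged into one kernel-verified Lean document; each statement's English description precedes it below -/
import Mathlib

section
/- For every set X ⊆ ℕ, the upper Buck density of X computed in ℕ equals the upper Buck density of X computed in ℤ, i.e., 𝔟*_ℕ(X) = 𝔟*_ℤ(X). -/
open Set Filter Topology

/-- An upper quasi-density on ℕ. -/
def IsUpperQuasiDensity (μ : Set ℕ → ℝ) : Prop :=
  μ Set.univ = 1 ∧
  (∀ X : Set ℕ, μ X ≤ 1) ∧
  (∀ X Y : Set ℕ, μ (X ∪ Y) ≤ μ X + μ Y) ∧
  (∀ (X : Set ℕ) (k : ℕ), 0 < k → μ ((fun x => k * x) '' X) = μ X / k) ∧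
  (∀ (X : Set ℕ) (h : ℕ), μ ((fun x => x + h) '' X) = μ X)

/-- An upper density on ℕ: a monotone upper quasi-density. -/
def IsUpperDensity (μ : Set ℕ → ℝ) : Prop :=
  IsUpperQuasiDensity μ ∧ ∀ X Y : Set ℕ, X ⊆ Y → μ X ≤ μ Y

/-- A set of naturals is small if every upper quasi-density vanishes on it. -/
def SmallSet (X : Set ℕ) : Prop :=
  ∀ μ : Set ℕ → ℝ, IsUpperQuasiDensity μ → μ X = 0

/-- The upper asymptotic density of a set of naturals. -/
noncomputable def upperAsymptoticDensity (X : Set ℕ) : ℝ :=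
  limsup (fun n : ℕ => ((X ∩ Set.Icc 1 n).ncard : ℝ) / n) atTop

/-- The arithmetic progression k·ℕ + h. -/
def AP (k h : ℕ) : Set ℕ := {x : ℕ | ∃ m : ℕ, x = k * m + h}

/-- A finite union of arithmetic progressions of ℕ. -/
def IsFinUnionAP (A : Set ℕ) : Prop :=
  ∃ s : Finset (ℕ × ℕ), (∀ p ∈ s, 0 < p.1) ∧ A = ⋃ p ∈ s, AP p.1 p.2

/-- The upper Buck density of a set of naturals. -/
noncomputable def buckDensity (X : Set ℕ) : ℝ :=
  sInf {d : ℝ | ∃ A : Set ℕ, IsFinUnionAP A ∧ X ⊆ A ∧ d = upperAsymptoticDensity A}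

/-- `rk k X` is the number of residues h ∈ [0, k-1] with X ∩ (k·ℕ + h) ≠ ∅. -/
noncomputable def rk (k : ℕ) (X : Set ℕ) : ℕ :=
  {h : ℕ | h < k ∧ (X ∩ AP k h).Nonempty}.ncard

/-- `wk μ k S` is the number of residues h ∈ [0, k-1] with μ(S ∩ (k·ℕ + h)) ≠ 0. -/
noncomputable def wk (μ : Set ℕ → ℝ) (k : ℕ) (S : Set ℕ) : ℕ :=
  {h : ℕ | h < k ∧ μ (S ∩ AP k h) ≠ 0}.ncard

/-- An upper quasi-density on ℤ. -/
def IsUpperQuasiDensityZ (μ : Set ℤ → ℝ) : Prop :=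
  μ Set.univ = 1 ∧
  (∀ X : Set ℤ, μ X ≤ 1) ∧
  (∀ X Y : Set ℤ, μ (X ∪ Y) ≤ μ X + μ Y) ∧
  (∀ (X : Set ℤ) (k : ℕ), 0 < k → μ ((fun x => (k : ℤ) * x) '' X) = μ X / k) ∧
  (∀ (X : Set ℤ) (h : ℕ), μ ((fun x => x + (h : ℤ)) '' X) = μ X)

/-- The upper asymptotic density of a set of integers. -/
noncomputable def upperAsymptoticDensityZ (S : Set ℤ) : ℝ :=
  limsup (fun n : ℕ => ((S ∩ Set.Icc (1 : ℤ) (n : ℤ)).ncard : ℝ) / n) atTop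

/-- The arithmetic progression k·ℤ + h of ℤ. -/
def APZ (k h : ℕ) : Set ℤ := {x : ℤ | ∃ m : ℤ, x = (k : ℤ) * m + (h : ℤ)}

/-- A finite union of arithmetic progressions of ℤ. -/
def IsFinUnionAPZ (B : Set ℤ) : Prop :=
  ∃ s : Finset (ℕ × ℕ), (∀ p ∈ s, 0 < p.1) ∧ B = ⋃ p ∈ s, APZ p.1 p.2

/-- The upper Buck density of a set of integers. -/
noncomputable def buckDensityZ (S : Set ℤ) : ℝ :=
  sInf {d : ℝ | ∃ B : Set ℤ, IsFinUnionAPZ B ∧ S ⊆ B ∧ d = upperAsymptoticDensityZ B}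

/-! ### Auxiliary lemmas -/

lemma mem_AP_iff' {k h : ℕ} (hk : 0 < k) {x : ℕ} :
    x ∈ AP k h ↔ h ≤ x ∧ x % k = h % k := by
  constructor
  · rintro ⟨m, rfl⟩
    exact ⟨Nat.le_add_left _ _, by simp [Nat.mul_add_mod]⟩
  · rintro ⟨hle, hmod⟩
    have hdvd : k ∣ x - h := (Nat.modEq_iff_dvd' hle).1 hmod.symm
    obtain ⟨c, hc⟩ := hdvd
    exact ⟨c, by omega⟩

lemma mem_APZ_iff' {k h : ℕ} (hk : 0 < k) {x : ℤ} :
    x ∈ APZ k h ↔ x % (k : ℤ) = (h : ℤ) % (k : ℤ) := by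
  constructor
  · rintro ⟨m, rfl⟩
    rw [add_comm, Int.add_mul_emod_self_left]
  · intro hx
    have h0 : (x - (h : ℤ)) % (k : ℤ) = 0 := by
      rw [Int.sub_emod, hx]
      simp
    obtain ⟨c, hc⟩ := Int.dvd_of_emod_eq_zero h0
    exact ⟨c, by omega⟩

lemma cast_mem_APZ_iff {k h : ℕ} (hk : 0 < k) (x : ℕ) :
    ((x : ℤ) ∈ APZ k h) ↔ x ∈ AP k (h % k) := by
  rw [mem_APZ_iff' hk, mem_AP_iff' hk]
  have c1 : ((x % k : ℕ) : ℤ) = (x : ℤ) % (k : ℤ) := Int.natCast_mod x k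
  have c2 : ((h % k : ℕ) : ℤ) = (h : ℤ) % (k : ℤ) := Int.natCast_mod h k
  constructor
  · intro hmod
    have hx : x % k = h % k := by
      have : ((x % k : ℕ) : ℤ) = ((h % k : ℕ) : ℤ) := by rw [c1, c2, hmod]
      exact_mod_cast this
    refine ⟨hx ▸ Nat.mod_le x k, ?_⟩
    rw [Nat.mod_mod_of_dvd h dvd_rfl]
    exact hx
  · rintro ⟨hle, hmod⟩
    rw [Nat.mod_mod_of_dvd h dvd_rfl] at hmod
    rw [← c1, ← c2, hmod]

lemma cast_mem_APZ_of_mem_AP {k h : ℕ} {x : ℕ} (hx : x ∈ AP k h) : (x : ℤ) ∈ APZ k h := by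
  obtain ⟨m, rfl⟩ := hx
  exact ⟨(m : ℤ), by push_cast; ring⟩

lemma toNat_mem_AP {k h : ℕ} (hk : 0 < k) {x : ℤ} (hx : x ∈ APZ k h) (hle : (h : ℤ) ≤ x) :
    x.toNat ∈ AP k h := by
  obtain ⟨m, rfl⟩ := hx
  have hm : 0 ≤ m := by
    have h0 : 0 ≤ (k : ℤ) * m := by omega
    exact (mul_nonneg_iff_of_pos_left (by exact_mod_cast hk)).mp h0
  refine ⟨m.toNat, ?_⟩
  have : (((k : ℤ) * m + (h : ℤ)).toNat : ℤ) = ((k * m.toNat + h : ℕ) : ℤ) := by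
    push_cast [Int.toNat_of_nonneg hm]
    rw [Int.toNat_of_nonneg (by omega)]
  exact_mod_cast this

lemma aux_limsup_eq (f g : ℕ → ℕ) (C : ℝ)
    (hfg : ∀ n, (f n : ℝ) ≤ g n) (hgf : ∀ n, (g n : ℝ) ≤ f n + C)
    (hf1 : ∀ n, (f n : ℝ) ≤ n) (hg1 : ∀ n, (g n : ℝ) ≤ n) :
    limsup (fun n : ℕ => (f n : ℝ) / n) atTop = limsup (fun n : ℕ => (g n : ℝ) / n) atTop := by
  have hC : 0 ≤ C := by have := hgf 0; have := hfg 0; linarith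
  have bound : ∀ (u : ℕ → ℕ), (∀ n, (u n : ℝ) ≤ n) → ∀ n, 0 ≤ (u n : ℝ) / n ∧ (u n : ℝ) / n ≤ 1 := by
    intro u hu n
    rcases Nat.eq_zero_or_pos n with rfl | hn
    · simp
    · have hn' : (0:ℝ) < n := by exact_mod_cast hn
      constructor
      · positivity
      · rw [div_le_one hn']; exact hu n
  have bddf : IsBoundedUnder (· ≤ ·) atTop (fun n : ℕ => (f n : ℝ) / n) :=
    isBoundedUnder_of ⟨1, fun n => (bound f hf1 n).2⟩
  have bddg : IsBoundedUnder (· ≤ ·) atTop (fun n : ℕ => (g n : ℝ) / n) :=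
    isBoundedUnder_of ⟨1, fun n => (bound g hg1 n).2⟩
  have cobf : IsCoboundedUnder (· ≤ ·) atTop (fun n : ℕ => (f n : ℝ) / n) :=
    (isBoundedUnder_of ⟨0, fun n => (bound f hf1 n).1⟩ :
      IsBoundedUnder (· ≥ ·) atTop _).isCoboundedUnder_le
  have cobg : IsCoboundedUnder (· ≤ ·) atTop (fun n : ℕ => (g n : ℝ) / n) :=
    (isBoundedUnder_of ⟨0, fun n => (bound g hg1 n).1⟩ :
      IsBoundedUnder (· ≥ ·) atTop _).isCoboundedUnder_le
  apply le_antisymm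
  · refine limsup_le_limsup (Eventually.of_forall fun n => ?_) cobf bddg
    rcases Nat.eq_zero_or_pos n with rfl | hn
    · simp
    · have hn' : (0:ℝ) < n := by exact_mod_cast hn
      exact div_le_div_of_nonneg_right (hfg n) hn'.le |>.trans_eq rfl
  · have key : ∀ ε : ℝ, 0 < ε →
        limsup (fun n : ℕ => (g n : ℝ) / n) atTop ≤ limsup (fun n : ℕ => (f n : ℝ) / n) atTop + ε := by
      intro ε hε
      have hev : ∀ᶠ n : ℕ in atTop, (g n : ℝ) / n ≤ (f n : ℝ) / n + ε := by
        filter_upwards [eventually_ge_atTop (⌈C / ε⌉₊ + 1)] with n hn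
        have hn0 : 0 < n := by omega
        have hn' : (0:ℝ) < n := by exact_mod_cast hn0
        have hCn : C / n ≤ ε := by
          rw [div_le_iff₀ hn']
          calc C = (C / ε) * ε := by field_simp
          _ ≤ (⌈C / ε⌉₊ + 1 : ℝ) * ε := by
              have : C / ε ≤ (⌈C / ε⌉₊ : ℝ) := Nat.le_ceil _
              nlinarith
          _ ≤ ε * n := by
              have : ((⌈C / ε⌉₊ + 1 : ℕ) : ℝ) ≤ (n : ℝ) := by exact_mod_cast hn
              push_cast at this
              nlinarith
        calc (g n : ℝ) / n ≤ ((f n : ℝ) + C) / n := div_le_div_of_nonneg_right (hgf n) hn'.le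
        _ = (f n : ℝ) / n + C / n := by ring
        _ ≤ (f n : ℝ) / n + ε := by linarith
      calc limsup (fun n : ℕ => (g n : ℝ) / n) atTop
          ≤ limsup (fun n : ℕ => (f n : ℝ) / n + ε) atTop := by
            refine limsup_le_limsup hev cobg ?_
            exact isBoundedUnder_of ⟨1 + ε, fun n => by have := (bound f hf1 n).2; linarith⟩
        _ = limsup (fun n : ℕ => (f n : ℝ) / n) atTop + ε :=
            limsup_add_const atTop _ ε bddf cobf
    by_contra hlt
    push_neg at hlt
    have := key ((limsup (fun n : ℕ => (g n : ℝ) / n) atTop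
      - limsup (fun n : ℕ => (f n : ℝ) / n) atTop) / 2) (by linarith)
    linarith

lemma claim2_sets (s : Finset (ℕ × ℕ)) (hs : ∀ p ∈ s, 0 < p.1) (n : ℕ) :
    (⋃ p ∈ s, APZ p.1 p.2) ∩ Set.Icc (1 : ℤ) (n : ℤ)
      = (fun x : ℕ => (x : ℤ)) '' ((⋃ p ∈ s, AP p.1 (p.2 % p.1)) ∩ Set.Icc 1 n) := by
  ext x
  simp only [Set.mem_inter_iff, Set.mem_iUnion, Set.mem_image, Set.mem_Icc, exists_prop]
  constructor
  · rintro ⟨⟨p, hp, hx⟩, h1, h2⟩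
    have hx0 : (x.toNat : ℤ) = x := Int.toNat_of_nonneg (by omega)
    refine ⟨x.toNat, ⟨⟨p, hp, ?_⟩, ?_, ?_⟩, hx0⟩
    · rw [← cast_mem_APZ_iff (hs p hp), hx0]; exact hx
    · omega
    · omega
  · rintro ⟨a, ⟨⟨p, hp, ha⟩, h1, h2⟩, rfl⟩
    exact ⟨⟨p, hp, (cast_mem_APZ_iff (hs p hp) a).2 ha⟩, by exact_mod_cast h1, by exact_mod_cast h2⟩

lemma subset1' (s : Finset (ℕ × ℕ)) (n : ℕ) :
    (fun x : ℕ => (x : ℤ)) '' ((⋃ p ∈ s, AP p.1 p.2) ∩ Set.Icc 1 n)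
      ⊆ (⋃ p ∈ s, APZ p.1 p.2) ∩ Set.Icc (1 : ℤ) (n : ℤ) := by
  rintro _ ⟨a, ⟨ha, h1, h2⟩, rfl⟩
  simp only [Set.mem_iUnion, exists_prop] at ha
  obtain ⟨p, hp, hap⟩ := ha
  refine ⟨?_, ?_, ?_⟩
  · simp only [Set.mem_iUnion, exists_prop]
    exact ⟨p, hp, cast_mem_APZ_of_mem_AP hap⟩
  · show (1:ℤ) ≤ (a:ℤ); exact_mod_cast h1
  · show (a:ℤ) ≤ (n:ℤ); exact_mod_cast h2

lemma subset2' (s : Finset (ℕ × ℕ)) (hs : ∀ p ∈ s, 0 < p.1) (n : ℕ) :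
    (⋃ p ∈ s, APZ p.1 p.2) ∩ Set.Icc (1 : ℤ) (n : ℤ)
      ⊆ (fun x : ℕ => (x : ℤ)) '' ((⋃ p ∈ s, AP p.1 p.2) ∩ Set.Icc 1 n)
        ∪ ⋃ p ∈ s, Set.Ico (1 : ℤ) (p.2 : ℤ) := by
  rintro x ⟨hx, h1, h2⟩
  simp only [Set.mem_iUnion, exists_prop] at hx
  obtain ⟨p, hp, hxp⟩ := hx
  by_cases hle : (p.2 : ℤ) ≤ x
  · left
    have hx0 : (x.toNat : ℤ) = x := Int.toNat_of_nonneg (by omega)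
    refine ⟨x.toNat, ⟨?_, ?_, ?_⟩, hx0⟩
    · simp only [Set.mem_iUnion, exists_prop]
      exact ⟨p, hp, toNat_mem_AP (hs p hp) hxp hle⟩
    · omega
    · omega
  · right
    simp only [Set.mem_iUnion, exists_prop]
    exact ⟨p, hp, by constructor <;> omega⟩

lemma ncard_Icc_nat (n : ℕ) : (Set.Icc 1 n).ncard = n := by
  rw [← Finset.coe_Icc, Set.ncard_coe_finset, Nat.card_Icc]; omega

lemma ncard_Icc_int (n : ℕ) : (Set.Icc (1:ℤ) (n:ℤ)).ncard = n := by
  rw [← Finset.coe_Icc, Set.ncard_coe_finset, Int.card_Icc]; omega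

lemma keyA (s : Finset (ℕ × ℕ)) (hs : ∀ p ∈ s, 0 < p.1) :
    upperAsymptoticDensityZ (⋃ p ∈ s, APZ p.1 p.2)
      = upperAsymptoticDensity (⋃ p ∈ s, AP p.1 (p.2 % p.1)) := by
  unfold upperAsymptoticDensityZ upperAsymptoticDensity
  congr 1
  funext n
  rw [claim2_sets s hs n, Set.ncard_image_of_injective _ Nat.cast_injective]

lemma keyB (s : Finset (ℕ × ℕ)) (hs : ∀ p ∈ s, 0 < p.1) :
    upperAsymptoticDensityZ (⋃ p ∈ s, APZ p.1 p.2)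
      = upperAsymptoticDensity (⋃ p ∈ s, AP p.1 p.2) := by
  have hinj : Function.Injective (fun x : ℕ => (x : ℤ)) := fun a b h => by simpa using h
  set E : Set ℤ := ⋃ p ∈ s, Set.Ico (1 : ℤ) (p.2 : ℤ) with hE
  have hEfin : E.Finite := Set.Finite.biUnion s.finite_toSet (fun p _ => Set.finite_Ico _ _)
  set f : ℕ → ℕ := fun n => ((⋃ p ∈ s, AP p.1 p.2) ∩ Set.Icc 1 n).ncard with hf
  set g : ℕ → ℕ := fun n => ((⋃ p ∈ s, APZ p.1 p.2) ∩ Set.Icc (1:ℤ) (n:ℤ)).ncard with hg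
  have hgfin : ∀ n : ℕ, ((⋃ p ∈ s, APZ p.1 p.2) ∩ Set.Icc (1:ℤ) (n:ℤ)).Finite :=
    fun n => (Set.finite_Icc _ _).subset inter_subset_right
  have hffin : ∀ n : ℕ, ((⋃ p ∈ s, AP p.1 p.2) ∩ Set.Icc 1 n).Finite :=
    fun n => (Set.finite_Icc _ _).subset inter_subset_right
  have hfg : ∀ n, f n ≤ g n := by
    intro n
    have h1 := Set.ncard_image_of_injective ((⋃ p ∈ s, AP p.1 p.2) ∩ Set.Icc 1 n) hinj
    calc f n = ((fun x : ℕ => (x : ℤ)) '' ((⋃ p ∈ s, AP p.1 p.2) ∩ Set.Icc 1 n)).ncard := h1.symm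
      _ ≤ g n := Set.ncard_le_ncard (subset1' s n) (hgfin n)
  have hgf : ∀ n, g n ≤ f n + E.ncard := by
    intro n
    calc g n ≤ ((fun x : ℕ => (x : ℤ)) '' ((⋃ p ∈ s, AP p.1 p.2) ∩ Set.Icc 1 n) ∪ E).ncard :=
          Set.ncard_le_ncard (subset2' s hs n)
            (Set.Finite.union (((hffin n).image _)) hEfin)
      _ ≤ ((fun x : ℕ => (x : ℤ)) '' ((⋃ p ∈ s, AP p.1 p.2) ∩ Set.Icc 1 n)).ncard + E.ncard :=
          Set.ncard_union_le _ _
      _ = f n + E.ncard := by rw [Set.ncard_image_of_injective _ hinj]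
  have hf1 : ∀ n, f n ≤ n := by
    intro n
    calc f n ≤ (Set.Icc 1 n).ncard :=
          Set.ncard_le_ncard inter_subset_right (Set.finite_Icc _ _)
      _ = n := ncard_Icc_nat n
  have hg1 : ∀ n, g n ≤ n := by
    intro n
    calc g n ≤ (Set.Icc (1:ℤ) (n:ℤ)).ncard :=
          Set.ncard_le_ncard inter_subset_right (Set.finite_Icc _ _)
      _ = n := ncard_Icc_int n
  unfold upperAsymptoticDensityZ upperAsymptoticDensity
  exact (aux_limsup_eq f g (E.ncard : ℝ)
    (fun n => by exact_mod_cast hfg n)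
    (fun n => by exact_mod_cast hgf n)
    (fun n => by exact_mod_cast hf1 n)
    (fun n => by exact_mod_cast hg1 n)).symm

/-- The upper Buck density of X ⊆ ℕ computed in ℕ equals the one computed in ℤ. -/
theorem buckDensity_nat_eq_buckDensity_int (X : Set ℕ) :
    buckDensity X = buckDensityZ ((fun n : ℕ => (n : ℤ)) '' X) := by
  unfold buckDensity buckDensityZ
  congr 1
  ext d
  simp only [Set.mem_setOf_eq]
  constructor
  · rintro ⟨A, ⟨s, hs, rfl⟩, hXA, rfl⟩
    refine ⟨⋃ p ∈ s, APZ p.1 p.2, ⟨s, hs, rfl⟩, ?_, (keyB s hs).symm⟩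
    rintro _ ⟨x, hx, rfl⟩
    have := hXA hx
    simp only [Set.mem_iUnion, exists_prop] at this ⊢
    obtain ⟨p, hp, hxp⟩ := this
    exact ⟨p, hp, cast_mem_APZ_of_mem_AP hxp⟩
  · rintro ⟨B, ⟨s, hs, rfl⟩, hXB, rfl⟩
    refine ⟨⋃ p ∈ s, AP p.1 (p.2 % p.1), ?_, ?_, keyA s hs⟩
    · refine ⟨s.image (fun p => (p.1, p.2 % p.1)), ?_, ?_⟩
      · intro q hq
        simp only [Finset.mem_image] at hq
        obtain ⟨p, hp, rfl⟩ := hq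
        exact hs p hp
      · ext x
        simp only [Set.mem_iUnion, exists_prop, Finset.mem_image]
        constructor
        · rintro ⟨p, hp, h⟩
          exact ⟨(p.1, p.2 % p.1), ⟨p, hp, rfl⟩, h⟩
        · rintro ⟨q, ⟨p, hp, rfl⟩, h⟩
          exact ⟨p, hp, h⟩
    · intro x hx
      have : (x : ℤ) ∈ ⋃ p ∈ s, APZ p.1 p.2 := hXB ⟨x, hx, rfl⟩
      simp only [Set.mem_iUnion, exists_prop] at this ⊢
      obtain ⟨p, hp, hxp⟩ := this
      exact ⟨p, hp, (cast_mem_APZ_iff (hs p hp) x).1 hxp⟩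
end

section
/- The family of small subsets of ℕ is an ideal on ℕ: ℕ itself is not small, every subset of a small set is small, and the union of two small sets is small. -/
open Set Filter Topology

/-!
Put `ρ X = inf_k rk k X / k` (`residueDensity`). Every upper quasi-density `μ` satisfies
`μ X ≤ rk k X / k`, since `X` is the union of its `rk k X` nonempty traces on the classes
`k ℕ + h`, each of `μ`-value at most `1 / k` by translation and dilation invariance.
Conversely `ρ` is itself an upper quasi-density. So `X` is small iff `ρ X = 0`, and the
ideal properties follow from `ρ ℕ = 1`, monotonicity of `ρ` and subadditivity of each `μ`.
-/

lemma mem_AP_iff_mod_eq {k h x : ℕ} (hh : h < k) : x ∈ AP k h ↔ x % k = h := by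
  constructor
  · rintro ⟨m, rfl⟩
    simp [Nat.mod_eq_of_lt hh]
  · intro hx
    exact ⟨x / k, by rw [← hx, Nat.div_add_mod]⟩

lemma rk_eq_ncard_image_mod {k : ℕ} (hk : 0 < k) (X : Set ℕ) :
    rk k X = ((· % k) '' X).ncard := by
  rw [rk]
  congr 1
  ext h
  constructor
  · rintro ⟨hh, x, hxX, hxh⟩
    exact ⟨x, hxX, (mem_AP_iff_mod_eq hh).mp hxh⟩
  · rintro ⟨x, hx, rfl⟩
    exact ⟨Nat.mod_lt _ hk, x, hx, (mem_AP_iff_mod_eq (Nat.mod_lt _ hk)).mpr rfl⟩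

lemma image_mod_subset_Iio {k : ℕ} (hk : 0 < k) (X : Set ℕ) : (· % k) '' X ⊆ Iio k := by
  rintro _ ⟨x, -, rfl⟩
  exact Nat.mod_lt x hk

lemma rk_le_self {k : ℕ} (hk : 0 < k) (X : Set ℕ) : rk k X ≤ k := by
  rw [rk_eq_ncard_image_mod hk]
  exact (ncard_le_ncard (image_mod_subset_Iio hk X)).trans_eq (ncard_Iio_nat k)

lemma rk_mono {k : ℕ} (hk : 0 < k) {X Y : Set ℕ} (h : X ⊆ Y) : rk k X ≤ rk k Y := by
  rw [rk_eq_ncard_image_mod hk, rk_eq_ncard_image_mod hk]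
  exact ncard_le_ncard (image_mono h) ((finite_Iio k).subset (image_mod_subset_Iio hk Y))

lemma rk_univ {k : ℕ} (hk : 0 < k) : rk k univ = k := by
  refine (rk_le_self hk univ).antisymm ?_
  rw [rk_eq_ncard_image_mod hk]
  refine (ncard_Iio_nat k).symm.trans_le (ncard_le_ncard (fun h (hh : h < k) => ?_) ?_)
  · exact ⟨h, trivial, Nat.mod_eq_of_lt hh⟩
  · exact (finite_Iio k).subset (image_mod_subset_Iio hk univ)

lemma rk_union_le {k : ℕ} (hk : 0 < k) (X Y : Set ℕ) : rk k (X ∪ Y) ≤ rk k X + rk k Y := by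
  simp only [rk_eq_ncard_image_mod hk, image_union]
  exact ncard_union_le _ _

lemma rk_image_add {k : ℕ} (hk : 0 < k) (X : Set ℕ) (h : ℕ) :
    rk k ((· + h) '' X) = rk k X := by
  rw [rk_eq_ncard_image_mod hk, rk_eq_ncard_image_mod hk, image_image]
  -- adding `h` permutes the residues mod `k`
  have hcomp : (fun x => (x + h) % k) = (fun r => (r + h) % k) ∘ (· % k) := by
    funext x
    simp [Nat.add_mod]
  rw [hcomp, image_comp]
  refine InjOn.ncard_image fun a ha b hb hab => ?_
  obtain ⟨x, -, rfl⟩ := ha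
  obtain ⟨y, -, rfl⟩ := hb
  have := Nat.ModEq.add_right_cancel' h hab
  rwa [Nat.ModEq, Nat.mod_mod, Nat.mod_mod] at this

lemma rk_mul_image_mul {k m : ℕ} (hk : 0 < k) (hm : 0 < m) (X : Set ℕ) :
    rk (k * m) ((k * ·) '' X) = rk m X := by
  rw [rk_eq_ncard_image_mod (Nat.mul_pos hk hm), rk_eq_ncard_image_mod hm, image_image]
  have hcomp : (fun x => k * x % (k * m)) = (k * ·) ∘ (· % m) := by
    funext x
    simp [Nat.mul_mod_mul_left]
  rw [hcomp, image_comp]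
  exact ncard_image_of_injective _ (mul_right_injective₀ hk.ne')

lemma rk_mul_le {k m : ℕ} (hk : 0 < k) (hm : 0 < m) (X : Set ℕ) :
    rk (k * m) X ≤ m * rk k X := by
  have hkm := Nat.mul_pos hk hm
  rw [rk_eq_ncard_image_mod hkm, rk_eq_ncard_image_mod hk]
  -- a residue `r` mod `k * m` is determined by `(r % k, r / k)`, with `r / k < m`
  calc ((· % (k * m)) '' X).ncard ≤ (((· % k) '' X) ×ˢ Iio m).ncard := by
        refine ncard_le_ncard_of_injOn (fun r => (r % k, r / k)) ?_ ?_
          (((finite_Iio k).subset (image_mod_subset_Iio hk X)).prod (finite_Iio m))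
        · rintro _ ⟨x, hx, rfl⟩
          exact ⟨⟨x, hx, (Nat.mod_mod_of_dvd x (dvd_mul_right k m)).symm⟩,
            Nat.div_lt_of_lt_mul (Nat.mod_lt x hkm)⟩
        · intro r _ s _ hrs
          simp only [Prod.mk.injEq] at hrs
          rw [← Nat.div_add_mod r k, ← Nat.div_add_mod s k, hrs.1, hrs.2]
    _ = m * ((· % k) '' X).ncard := by rw [ncard_prod, ncard_Iio_nat, mul_comm]

lemma rk_mul_div_le {k m : ℕ} (hk : 0 < k) (hm : 0 < m) (X : Set ℕ) :
    (rk (k * m) X : ℝ) / (k * m : ℕ) ≤ rk k X / k := by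
  have hm' : (0 : ℝ) < m := Nat.cast_pos.mpr hm
  calc (rk (k * m) X : ℝ) / (k * m : ℕ) ≤ (m * rk k X : ℕ) / (k * m : ℕ) := by
        gcongr
        exact rk_mul_le hk hm X
    _ = rk k X / k := by
        push_cast
        field_simp

noncomputable def residueDensity (X : Set ℕ) : ℝ := ⨅ k : ℕ+, (rk k X : ℝ) / k

lemma residueDensity_le {k : ℕ} (hk : 0 < k) (X : Set ℕ) :
    residueDensity X ≤ rk k X / k :=
  ciInf_le ⟨0, by rintro _ ⟨k, rfl⟩; positivity⟩ (⟨k, hk⟩ : ℕ+)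

lemma le_residueDensity {c : ℝ} {X : Set ℕ} (h : ∀ k : ℕ, 0 < k → c ≤ rk k X / k) :
    c ≤ residueDensity X :=
  le_ciInf fun k => h k k.pos

lemma residueDensity_univ : residueDensity univ = 1 := by
  refine le_antisymm ?_ (le_residueDensity fun k hk => ?_)
  · simpa [rk_univ] using residueDensity_le one_pos univ
  · rw [rk_univ hk, div_self (Nat.cast_pos.mpr hk).ne']

lemma residueDensity_le_one (X : Set ℕ) : residueDensity X ≤ 1 :=
  (residueDensity_le one_pos X).trans (by simpa using rk_le_self one_pos X)

lemma residueDensity_mono {X Y : Set ℕ} (h : X ⊆ Y) : residueDensity X ≤ residueDensity Y :=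
  le_residueDensity fun k hk =>
    (residueDensity_le hk X).trans (by gcongr; exact rk_mono hk h)

lemma residueDensity_union_le (X Y : Set ℕ) :
    residueDensity (X ∪ Y) ≤ residueDensity X + residueDensity Y := by
  refine le_ciInf_add_ciInf fun k m => ?_
  calc residueDensity (X ∪ Y) ≤ (rk (k * m) (X ∪ Y) : ℝ) / (k * m : ℕ) :=
        residueDensity_le (Nat.mul_pos k.pos m.pos) _
    _ ≤ (rk (k * m) X : ℝ) / (k * m : ℕ) + (rk (m * k) Y : ℝ) / (m * k : ℕ) := by
        rw [mul_comm (m : ℕ), ← add_div]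
        gcongr
        exact_mod_cast rk_union_le (Nat.mul_pos k.pos m.pos) X Y
    _ ≤ rk k X / k + rk m Y / m :=
        add_le_add (rk_mul_div_le k.pos m.pos X) (rk_mul_div_le m.pos k.pos Y)

lemma residueDensity_image_mul {k : ℕ} (hk : 0 < k) (X : Set ℕ) :
    residueDensity ((k * ·) '' X) = residueDensity X / k := by
  have hk' : (0 : ℝ) < k := Nat.cast_pos.mpr hk
  refine le_antisymm ?_ ?_
  · rw [le_div_iff₀ hk']
    refine le_residueDensity fun m hm => ?_
    have := residueDensity_le (Nat.mul_pos hk hm) ((k * ·) '' X)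
    rwa [rk_mul_image_mul hk hm, Nat.cast_mul, mul_comm, ← div_div, le_div_iff₀ hk'] at this
  · refine le_residueDensity fun m hm => ?_
    calc residueDensity X / k ≤ rk m X / m / k := by gcongr; exact residueDensity_le hm X
      _ = (rk (k * m) ((k * ·) '' X) : ℝ) / (k * m : ℕ) := by
        rw [rk_mul_image_mul hk hm, Nat.cast_mul, div_div, mul_comm]
      _ ≤ rk m ((k * ·) '' X) / m := by
        rw [mul_comm k]
        exact rk_mul_div_le hm hk _

lemma residueDensity_image_add (X : Set ℕ) (h : ℕ) :
    residueDensity ((· + h) '' X) = residueDensity X := by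
  unfold residueDensity
  simp only [rk_image_add (PNat.pos _)]

lemma isUpperQuasiDensity_residueDensity : IsUpperQuasiDensity residueDensity :=
  ⟨residueDensity_univ, residueDensity_le_one, residueDensity_union_le,
    fun X _ hk => residueDensity_image_mul hk X, residueDensity_image_add⟩

namespace IsUpperQuasiDensity

variable {μ : Set ℕ → ℝ}

lemma le_one (hμ : IsUpperQuasiDensity μ) (X : Set ℕ) : μ X ≤ 1 :=
  hμ.2.1 X

lemma union_le (hμ : IsUpperQuasiDensity μ) (X Y : Set ℕ) : μ (X ∪ Y) ≤ μ X + μ Y :=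
  hμ.2.2.1 X Y

lemma apply_image_mul (hμ : IsUpperQuasiDensity μ) (X : Set ℕ) {k : ℕ} (hk : 0 < k) :
    μ ((k * ·) '' X) = μ X / k :=
  hμ.2.2.2.1 X k hk

lemma apply_image_add (hμ : IsUpperQuasiDensity μ) (X : Set ℕ) (h : ℕ) :
    μ ((· + h) '' X) = μ X :=
  hμ.2.2.2.2 X h

lemma empty (hμ : IsUpperQuasiDensity μ) : μ ∅ = 0 := by
  have := hμ.apply_image_mul ∅ two_pos
  rw [image_empty] at this
  linarith

lemma nonneg (hμ : IsUpperQuasiDensity μ) (X : Set ℕ) : 0 ≤ μ X := by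
  have := hμ.union_le X Xᶜ
  rw [union_compl_self, hμ.1] at this
  linarith [hμ.le_one Xᶜ]

lemma le_one_div_of_subset_AP (hμ : IsUpperQuasiDensity μ) {S : Set ℕ} {k h : ℕ} (hk : 0 < k)
    (hS : S ⊆ AP k h) : μ S ≤ 1 / k := by
  have hS_eq : S = (· + h) '' ((k * ·) '' {m | k * m + h ∈ S}) := by
    ext x
    simp only [image_image, mem_image]
    refine ⟨fun hx => ?_, ?_⟩
    · obtain ⟨m, rfl⟩ := hS hx
      exact ⟨m, hx, rfl⟩
    · rintro ⟨m, hm, rfl⟩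
      exact hm
  rw [hS_eq, hμ.apply_image_add, hμ.apply_image_mul _ hk]
  gcongr
  exact hμ.le_one _

lemma le_rk_div (hμ : IsUpperQuasiDensity μ) {k : ℕ} (hk : 0 < k) (X : Set ℕ) :
    μ X ≤ rk k X / k := by
  set R := {h : ℕ | h < k ∧ (X ∩ AP k h).Nonempty}
  have hR : R.Finite := (finite_Iio k).subset fun h hh => hh.1
  have hX : X = ⋃ h ∈ hR.toFinset, X ∩ AP k h := by
    ext x
    simp only [mem_iUnion, mem_inter_iff, hR.mem_toFinset, exists_prop]
    refine ⟨fun hx => ?_, fun ⟨_, _, hx, _⟩ => hx⟩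
    have hxk := (mem_AP_iff_mod_eq (Nat.mod_lt x hk)).mpr rfl
    exact ⟨x % k, ⟨Nat.mod_lt x hk, x, hx, hxk⟩, hx, hxk⟩
  calc μ X ≤ ∑ h ∈ hR.toFinset, μ (X ∩ AP k h) := by
        conv_lhs => rw [hX]
        exact Finset.apply_union_le_sum hμ.empty (hμ.union_le _ _) _
    _ ≤ hR.toFinset.card • (1 / k : ℝ) :=
        Finset.sum_le_card_nsmul _ _ _ fun _ _ =>
          hμ.le_one_div_of_subset_AP hk inter_subset_right
    _ = rk k X / k := by
        rw [rk, ncard_eq_toFinset_card R hR, nsmul_eq_mul, mul_one_div]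

lemma le_residueDensity (hμ : IsUpperQuasiDensity μ) (X : Set ℕ) : μ X ≤ residueDensity X :=
  _root_.le_residueDensity fun _ hk => hμ.le_rk_div hk X

end IsUpperQuasiDensity

lemma smallSet_iff_residueDensity_eq_zero {X : Set ℕ} :
    SmallSet X ↔ residueDensity X = 0 :=
  ⟨fun h => h _ isUpperQuasiDensity_residueDensity, fun h _ hμ =>
    le_antisymm (h ▸ hμ.le_residueDensity X) (hμ.nonneg X)⟩

/-- The small subsets of ℕ form an ideal: ℕ is not small, subsets of small sets
are small, and unions of two small sets are small. -/
theorem smallSet_isIdeal :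
    ¬ SmallSet (Set.univ : Set ℕ) ∧
    (∀ X Y : Set ℕ, X ⊆ Y → SmallSet Y → SmallSet X) ∧
    (∀ X Y : Set ℕ, SmallSet X → SmallSet Y → SmallSet (X ∪ Y)) := by
  refine ⟨?_, fun X Y hXY hY => ?_, fun X Y hX hY μ hμ => ?_⟩
  · simp [smallSet_iff_residueDensity_eq_zero, residueDensity_univ]
  · rw [smallSet_iff_residueDensity_eq_zero] at hY ⊢
    exact le_antisymm (hY ▸ residueDensity_mono hXY)
      (isUpperQuasiDensity_residueDensity.nonneg X)
  · refine le_antisymm ?_ (hμ.nonneg _)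
    simpa [hX μ hμ, hY μ hμ] using hμ.union_le X Y
end

section
/- Let X ⊆ ℕ and let (k_n)_{n ≥ 1} be an increasing sequence of positive integers such that, for every positive integer m, m divides k_n for all sufficiently large n. Then r_{k_n}(X)/k_n converges as n → ∞, and its limit equals inf_{k ≥ 1} r_k(X)/k. -/
open Set Filter Topology

/-! A residue `h` modulo `d * c` whose class meets `X` lies over the residue `h % d` modulo `d`,
whose class meets `X` as well, and each residue modulo `d` has exactly `c` lifts; hence
`r_{dc}(X) ≤ c · r_d(X)`, i.e. `r_k(X)/k` decreases along divisibility. As every `m` eventually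
divides `k_n`, the ratio `r_{k_n}(X)/k_n` eventually stays below each `r_m(X)/m`, and it never
drops below their infimum. -/

theorem AP_mul_subset_AP_mod (d c h : ℕ) : AP (d * c) h ⊆ AP d (h % d) := by
  rintro _ ⟨m, rfl⟩
  exact ⟨c * m + h / d, by rw [Nat.mul_add, ← mul_assoc, add_assoc, Nat.div_add_mod]⟩

theorem rk_mul_le_s4 (X : Set ℕ) {d : ℕ} (hd : 0 < d) (c : ℕ) : rk (d * c) X ≤ rk d X * c := by
  have hfin : {h : ℕ | h < d ∧ (X ∩ AP d h).Nonempty}.Finite :=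
    (Set.finite_lt_nat d).subset fun _ hh => hh.1
  calc rk (d * c) X
      ≤ ({h : ℕ | h < d ∧ (X ∩ AP d h).Nonempty} ×ˢ Iio c).ncard := by
        refine Set.ncard_le_ncard_of_injOn (fun h => (h % d, h / d)) ?_ ?_
          (hfin.prod (Set.finite_Iio c))
        · rintro h ⟨hlt, hne⟩
          exact ⟨⟨Nat.mod_lt h hd, hne.mono (inter_subset_inter_right X
            (AP_mul_subset_AP_mod d c h))⟩, Nat.div_lt_of_lt_mul hlt⟩
        · intro h₁ _ h₂ _ he
          simp only [Prod.mk.injEq] at he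
          rw [← Nat.div_add_mod h₁ d, ← Nat.div_add_mod h₂ d, he.1, he.2]
    _ = rk d X * c := by rw [Set.ncard_prod, rk, ncard_Iio_nat]

theorem rk_div_le_of_dvd (X : Set ℕ) {d n : ℕ} (hd : 0 < d) (hn : 0 < n) (hdn : d ∣ n) :
    (rk n X : ℝ) / n ≤ (rk d X : ℝ) / d := by
  obtain ⟨c, rfl⟩ := hdn
  rw [div_le_div_iff₀ (by exact_mod_cast hn) (by exact_mod_cast hd), Nat.cast_mul,
    mul_comm (d : ℝ), ← mul_assoc]
  gcongr
  exact_mod_cast rk_mul_le_s4 X hd c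

theorem tendsto_iInf_of_le_of_dvd {f : ℕ → ℝ} (hbdd : BddBelow (range fun m : ℕ+ => f m))
    (hf : ∀ ⦃d n : ℕ⦄, 0 < d → 0 < n → d ∣ n → f n ≤ f d) {k : ℕ → ℕ} (hpos : ∀ n, 0 < k n)
    (hdvd : ∀ m : ℕ, 0 < m → ∀ᶠ n in atTop, m ∣ k n) :
    Tendsto (fun n => f (k n)) atTop (𝓝 (⨅ m : ℕ+, f m)) := by
  rw [tendsto_order]
  refine ⟨fun a ha => .of_forall fun n => ha.trans_le (ciInf_le hbdd ⟨k n, hpos n⟩),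
    fun b hb => ?_⟩
  obtain ⟨m, hm⟩ := exists_lt_of_ciInf_lt hb
  filter_upwards [hdvd m m.pos] with n hn
  exact (hf m.pos (hpos n) hn).trans_lt hm

theorem tendsto_rk_div_general (X : Set ℕ) (k : ℕ → ℕ)
    (hpos : ∀ n, 0 < k n) (hdvd : ∀ m : ℕ, 0 < m → ∀ᶠ n in atTop, m ∣ k n) :
    Tendsto (fun n : ℕ => (rk (k n) X : ℝ) / (k n : ℝ)) atTop
      (𝓝 (⨅ m : ℕ+, (rk (m : ℕ) X : ℝ) / ((m : ℕ) : ℝ))) :=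
  tendsto_iInf_of_le_of_dvd (f := fun m => (rk m X : ℝ) / m)
    ⟨0, by rintro _ ⟨m, rfl⟩; positivity⟩ (fun _ _ hd hn hdn => rk_div_le_of_dvd X hd hn hdn)
    hpos hdvd

/-- If (k_n) is an increasing sequence of positive integers such that every
positive integer divides k_n for all large n, then r_{k_n}(X)/k_n converges to
inf_{k ≥ 1} r_k(X)/k. -/
theorem tendsto_rk_div (X : Set ℕ) (k : ℕ → ℕ) (hmono : StrictMono k)
    (hpos : ∀ n, 0 < k n) (hdvd : ∀ m : ℕ, 0 < m → ∀ᶠ n in atTop, m ∣ k n) :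
    Tendsto (fun n : ℕ => (rk (k n) X : ℝ) / (k n : ℝ)) atTop
      (𝓝 (⨅ m : ℕ+, (rk (m : ℕ) X : ℝ) / ((m : ℕ) : ℝ))) :=
  tendsto_rk_div_general X k hpos hdvd
end

section
/- Let μ* be an upper density on ℕ, and for every positive integer k and S ⊆ ℕ let w_k(S) be the number of residues h ∈ {0, …, k−1} such that μ*(S ∩ (k·ℕ + h)) ≠ 0. Let X ⊆ ℕ and let (k_n)_{n ≥ 1} be a sequence of pairwise coprime positive integers. If the series ∑_{n ≥ 1} (1 − w_{k_n}(X)/k_n) diverges to infinity, then μ*(X) = 0. In particular, if ∑_{n ≥ 1} 1/k_n = ∞ and w_{k_n}(X) ≤ k_n − 1 for every n ≥ 1, then μ*(X) = 0. -/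
open Set Filter Topology

open Function

/-!
Split a set `Y ⊆ M·ℕ + a` along the residues modulo `q`, coprime to `M`. By subadditivity,
`μ Y` is at most `w_q(Y)` times the largest `μ (Y ∩ (q·ℕ + h))`, and by the Chinese remainder
theorem each such piece lies in a progression of modulus `M q`. Iterating over pairwise coprime
moduli `k_0, …, k_{N-1}` gives
`μ X ≤ ∏_{n<N} w_{k_n}(X) / k_n ≤ exp (-∑_{n<N} (1 - w_{k_n}(X) / k_n))`,
which tends to `0` when the series diverges.
-/

lemma mem_AP_mod (k x : ℕ) : x ∈ AP k (x % k) :=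
  ⟨x / k, (Nat.div_add_mod x k).symm⟩

lemma modEq_of_mem_AP {k h x : ℕ} (hx : x ∈ AP k h) : x ≡ h [MOD k] := by
  obtain ⟨m, rfl⟩ := hx
  simp [Nat.ModEq]

lemma AP_inter_AP_subset_AP {M q : ℕ} (hMq : Nat.Coprime M q) (a b : ℕ) :
    ∃ c, AP M a ∩ AP q b ⊆ AP (M * q) c := by
  rcases (AP M a ∩ AP q b).eq_empty_or_nonempty with hempty | ⟨x₀, hx₀⟩
  · exact ⟨0, hempty.subset.trans (empty_subset _)⟩
  refine ⟨x₀ % (M * q), fun x hx => ?_⟩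
  have hxx₀ : x ≡ x₀ [MOD M * q] :=
    (Nat.modEq_and_modEq_iff_modEq_mul hMq).1
      ⟨(modEq_of_mem_AP hx.1).trans (modEq_of_mem_AP hx₀.1).symm,
        (modEq_of_mem_AP hx.2).trans (modEq_of_mem_AP hx₀.2).symm⟩
  rw [← hxx₀]
  exact mem_AP_mod _ x

lemma subset_biUnion_inter_AP {q : ℕ} (hq : 0 < q) (Y : Set ℕ) :
    Y ⊆ ⋃ h ∈ Finset.range q, Y ∩ AP q h := fun x hx =>
  mem_biUnion (Finset.mem_range.2 (Nat.mod_lt x hq)) ⟨hx, mem_AP_mod q x⟩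

lemma wk_eq_card_filter (μ : Set ℕ → ℝ) (q : ℕ) (Y : Set ℕ) :
    wk μ q Y = ((Finset.range q).filter fun h => μ (Y ∩ AP q h) ≠ 0).card := by
  rw [wk, ← ncard_coe_finset]
  congr 1
  ext h
  simp

namespace IsUpperQuasiDensity

variable {μ : Set ℕ → ℝ} (hμ : IsUpperQuasiDensity μ)
include hμ

lemma apply_empty : μ ∅ = 0 := by
  have h := hμ.2.2.2.1 ∅ 2 two_pos
  rw [image_empty] at h
  linarith

lemma apply_AP {q : ℕ} (hq : 0 < q) (h : ℕ) : μ (AP q h) = 1 / q := by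
  have hAP : AP q h = (fun x => x + h) '' ((fun x => q * x) '' univ) := by
    ext x
    simp [AP, eq_comm]
  rw [hAP, hμ.2.2.2.2, hμ.2.2.2.1 _ _ hq, hμ.1]

lemma apply_biUnion_le {ι : Type*} (s : Finset ι) (f : ι → Set ℕ) :
    μ (⋃ i ∈ s, f i) ≤ ∑ i ∈ s, μ (f i) := by
  classical
  induction s using Finset.induction_on with
  | empty => simp [hμ.apply_empty]
  | insert a s ha ih =>
    rw [Finset.set_biUnion_insert, Finset.sum_insert ha]
    linarith [hμ.2.2.1 (f a) (⋃ i ∈ s, f i)]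

end IsUpperQuasiDensity

namespace IsUpperDensity

variable {μ : Set ℕ → ℝ} (hμ : IsUpperDensity μ)
include hμ

lemma mono {Y Z : Set ℕ} (hYZ : Y ⊆ Z) : μ Y ≤ μ Z := hμ.2 Y Z hYZ

lemma nonneg (Y : Set ℕ) : 0 ≤ μ Y :=
  hμ.1.apply_empty ▸ hμ.mono (empty_subset Y)

lemma wk_mono (q : ℕ) {Y Z : Set ℕ} (hYZ : Y ⊆ Z) : wk μ q Y ≤ wk μ q Z := by
  rw [wk_eq_card_filter, wk_eq_card_filter]
  refine Finset.card_le_card (Finset.monotone_filter_right _ fun h _ hY hZ => hY ?_)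
  exact le_antisymm (hZ ▸ hμ.mono (inter_subset_inter_left _ hYZ)) (hμ.nonneg _)

lemma le_wk_mul {q : ℕ} (hq : 0 < q) {Y : Set ℕ} {B : ℝ}
    (hB : ∀ h < q, μ (Y ∩ AP q h) ≤ B) : μ Y ≤ wk μ q Y * B := by
  classical
  calc μ Y ≤ ∑ h ∈ Finset.range q, μ (Y ∩ AP q h) :=
        (hμ.mono (subset_biUnion_inter_AP hq Y)).trans (hμ.1.apply_biUnion_le _ _)
    _ = ∑ h ∈ (Finset.range q).filter (fun h => μ (Y ∩ AP q h) ≠ 0), μ (Y ∩ AP q h) :=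
        (Finset.sum_filter_of_ne fun _ _ hne => hne).symm
    _ ≤ ∑ _h ∈ (Finset.range q).filter (fun h => μ (Y ∩ AP q h) ≠ 0), B :=
        Finset.sum_le_sum fun h hh => hB h (Finset.mem_range.1 (Finset.mem_filter.1 hh).1)
    _ = wk μ q Y * B := by rw [Finset.sum_const, nsmul_eq_mul, wk_eq_card_filter]

lemma le_prod_wk_div_of_subset_AP {ι : Type*} {k : ι → ℕ} (s : Finset ι)
    (hpos : ∀ i ∈ s, 0 < k i) (hcop : (s : Set ι).Pairwise (Nat.Coprime on k))
    {M : ℕ} (hM : 0 < M) (hMs : ∀ i ∈ s, Nat.Coprime M (k i)) {a : ℕ} {Y : Set ℕ}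
    (hY : Y ⊆ AP M a) : μ Y ≤ 1 / M * ∏ i ∈ s, (wk μ (k i) Y : ℝ) / k i := by
  classical
  induction s using Finset.induction_on generalizing M a Y with
  | empty => simpa [hμ.1.apply_AP hM] using hμ.mono hY
  | insert j s hj ih =>
    rw [Finset.coe_insert, Set.pairwise_insert_of_notMem (Finset.mem_coe.not.2 hj)] at hcop
    have hMkj : ∀ i ∈ s, Nat.Coprime (M * k j) (k i) := fun i hi =>
      Nat.Coprime.mul_left (hMs i (Finset.mem_insert_of_mem hi)) (hcop.2 i hi).1
    have hpiece : ∀ h < k j, μ (Y ∩ AP (k j) h) ≤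
        1 / (M * k j : ℕ) * ∏ i ∈ s, (wk μ (k i) Y : ℝ) / k i := by
      intro h _
      obtain ⟨c, hc⟩ := AP_inter_AP_subset_AP (hMs j (Finset.mem_insert_self j s)) a h
      refine (ih (fun i hi => hpos i (Finset.mem_insert_of_mem hi)) hcop.1
        (Nat.mul_pos hM (hpos j (Finset.mem_insert_self j s))) hMkj
        fun x hx => hc ⟨hY hx.1, hx.2⟩).trans ?_
      gcongr with i
      exact hμ.wk_mono _ inter_subset_left
    calc μ Y
        ≤ wk μ (k j) Y * (1 / (M * k j : ℕ) * ∏ i ∈ s, (wk μ (k i) Y : ℝ) / k i) :=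
          hμ.le_wk_mul (hpos j (Finset.mem_insert_self j s)) hpiece
      _ = 1 / M * ∏ i ∈ insert j s, (wk μ (k i) Y : ℝ) / k i := by
          rw [Finset.prod_insert hj]
          push_cast
          ring

lemma le_prod_wk_div {k : ℕ → ℕ} (hpos : ∀ n, 0 < k n) (hcop : Pairwise (Nat.Coprime on k))
    (X : Set ℕ) (N : ℕ) : μ X ≤ ∏ n ∈ Finset.range N, (wk μ (k n) X : ℝ) / k n := by
  simpa using hμ.le_prod_wk_div_of_subset_AP (Finset.range N) (fun n _ => hpos n)
    (hcop.set_pairwise _) one_pos (fun n _ => Nat.coprime_one_left _) (a := 0)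
    fun x _ => ⟨x, by ring⟩

end IsUpperDensity

lemma Finset.prod_le_exp_neg_sum_one_sub {ι : Type*} (s : Finset ι) {x : ι → ℝ}
    (hx : ∀ i ∈ s, 0 ≤ x i) : ∏ i ∈ s, x i ≤ Real.exp (-∑ i ∈ s, (1 - x i)) := by
  rw [← Finset.sum_neg_distrib, Real.exp_sum]
  exact Finset.prod_le_prod hx fun i _ => by linarith [Real.add_one_le_exp (-(1 - x i))]

/-- If the series ∑ (1 - w_{k_n}(X)/k_n) diverges, then μ*(X) = 0; in particular
this holds if ∑ 1/k_n = ∞ and w_{k_n}(X) ≤ k_n - 1 for every n. -/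
theorem modular_criterion_w (μ : Set ℕ → ℝ) (hμ : IsUpperDensity μ)
    (X : Set ℕ) (k : ℕ → ℕ) (hpos : ∀ n, 0 < k n)
    (hcop : ∀ m n, m ≠ n → Nat.Coprime (k m) (k n)) :
    (Tendsto (fun n : ℕ =>
        ∑ i ∈ Finset.range n, (1 - (wk μ (k i) X : ℝ) / (k i : ℝ))) atTop atTop →
      μ X = 0) ∧
    ((Tendsto (fun n : ℕ => ∑ i ∈ Finset.range n, (1 : ℝ) / (k i : ℝ)) atTop atTop ∧
        ∀ n : ℕ, wk μ (k n) X ≤ k n - 1) →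
      μ X = 0) := by
  have divergent : Tendsto (fun n : ℕ =>
      ∑ i ∈ Finset.range n, (1 - (wk μ (k i) X : ℝ) / (k i : ℝ))) atTop atTop →
      μ X = 0 := by
    intro hdiv
    have hbound (N : ℕ) : μ X ≤
        Real.exp (-∑ i ∈ Finset.range N, (1 - (wk μ (k i) X : ℝ) / (k i : ℝ))) :=
      (hμ.le_prod_wk_div hpos hcop X N).trans
        (Finset.prod_le_exp_neg_sum_one_sub _ fun i _ => by positivity)
    have hlim := Real.tendsto_exp_atBot.comp (tendsto_neg_atTop_atBot.comp hdiv)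
    exact le_antisymm (ge_of_tendsto' hlim hbound) (hμ.nonneg X)
  refine ⟨divergent, fun ⟨hharmonic, hw⟩ => divergent ?_⟩
  refine tendsto_atTop_mono (fun N => Finset.sum_le_sum fun i _ => ?_) hharmonic
  have hki : (0 : ℝ) < k i := by exact_mod_cast hpos i
  have hwi : (wk μ (k i) X : ℝ) + 1 ≤ k i := by
    have := hpos i
    have := hw i
    exact_mod_cast (by omega : wk μ (k i) X + 1 ≤ k i)
  rw [le_sub_iff_add_le, ← add_div, div_le_one hki]
  linarith
end

section
/- Let (x_n)_{n ≥ 1} be a sequence in ℕ such that x_n divides x_{n+1} for every n ≥ 1. Then the set X := {x_n : n ≥ 1} is small. -/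
open Set Filter Topology

lemma iuqd_nonneg {μ : Set ℕ → ℝ} (hμ : IsUpperQuasiDensity μ) (X : Set ℕ) : 0 ≤ μ X := by
  obtain ⟨h1, h2, h3, h4, h5⟩ := hμ
  have := h3 X Xᶜ
  rw [Set.union_compl_self, h1] at this
  linarith [h2 Xᶜ]

lemma iuqd_empty {μ : Set ℕ → ℝ} (hμ : IsUpperQuasiDensity μ) : μ ∅ = 0 := by
  have h4 := hμ.2.2.2.1 ∅ 2 (by norm_num)
  simp only [Set.image_empty] at h4
  linarith

lemma iuqd_singleton {μ : Set ℕ → ℝ} (hμ : IsUpperQuasiDensity μ) (a : ℕ) : μ {a} = 0 := by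
  have h0 : μ {0} = 0 := by
    have h4 := hμ.2.2.2.1 {0} 2 (by norm_num)
    simp only [Set.image_singleton, mul_zero] at h4
    linarith
  have h5 := hμ.2.2.2.2 {0} a
  simp only [Set.image_singleton, zero_add] at h5
  rw [h5, h0]

lemma iuqd_finite {μ : Set ℕ → ℝ} (hμ : IsUpperQuasiDensity μ) {F : Set ℕ}
    (hF : F.Finite) : μ F = 0 := by
  refine le_antisymm ?_ (iuqd_nonneg hμ F)
  have hgen : ∀ s : Finset ℕ, μ (↑s : Set ℕ) ≤ 0 := by
    intro s
    induction s using Finset.induction_on with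
    | empty => simpa using le_of_eq (iuqd_empty hμ)
    | @insert a s _ ih =>
      have h : μ (insert a (↑s : Set ℕ)) ≤ μ {a} + μ (↑s : Set ℕ) := by
        rw [Set.insert_eq]; exact hμ.2.2.1 _ _
      rw [iuqd_singleton hμ a] at h
      push_cast
      linarith
  have := hgen hF.toFinset
  rwa [Set.Finite.coe_toFinset] at this
/-- If x_n divides x_{n+1} for every n, then {x_n : n} is small. -/
theorem smallSet_of_divisibility_chain (x : ℕ → ℕ) (hdvd : ∀ n, x n ∣ x (n + 1)) :
    SmallSet (Set.range x) := by
  intro μ hμ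
  by_cases hfin : (Set.range x).Finite
  · exact iuqd_finite hμ hfin
  · have hx : ∀ m n, m ≤ n → x m ∣ x n := by
      intro m n h
      induction n, h using Nat.le_induction with
      | base => exact dvd_rfl
      | succ n hn ih => exact ih.trans (hdvd n)
    have key : ∀ m, 0 < x m → μ (Set.range x) ≤ 1 / (x m : ℝ) := by
      intro m hm
      set S : Set ℕ := (fun n => x n / x m) '' Set.Ici m with hS
      have hT : x '' Set.Ici m = (fun t => x m * t) '' S := by
        ext y
        constructor
        · rintro ⟨n, hn, rfl⟩
          exact ⟨x n / x m, ⟨n, hn, rfl⟩, Nat.mul_div_cancel' (hx m n hn)⟩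
        · rintro ⟨s, ⟨n, hn, rfl⟩, rfl⟩
          exact ⟨n, hn, (Nat.mul_div_cancel' (hx m n hn)).symm⟩
      have hsplit : Set.range x = x '' Set.Iio m ∪ x '' Set.Ici m := by
        rw [← Set.image_union, Set.Iio_union_Ici, Set.image_univ]
      have hxm : (0 : ℝ) < (x m : ℝ) := by exact_mod_cast hm
      calc μ (Set.range x) ≤ μ (x '' Set.Iio m) + μ (x '' Set.Ici m) := by
              rw [hsplit]; exact hμ.2.2.1 _ _
        _ = μ (x '' Set.Ici m) := by
              rw [iuqd_finite hμ ((Set.finite_Iio m).image x), zero_add]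
        _ = μ S / (x m : ℝ) := by rw [hT, hμ.2.2.2.1 S (x m) hm]
        _ ≤ 1 / (x m : ℝ) := by
              gcongr
              exact hμ.2.1 S
    have hle : μ (Set.range x) ≤ 0 := by
      by_contra hpos
      push_neg at hpos
      obtain ⟨N, hN⟩ := exists_nat_gt (1 / μ (Set.range x))
      obtain ⟨m, hm⟩ : ∃ m, N + 1 ≤ x m := by
        by_contra h
        push_neg at h
        exact hfin ((Set.finite_Iio (N + 1)).subset (by
          rintro y ⟨n, rfl⟩; exact h n))
      have hxm : 0 < x m := lt_of_lt_of_le (Nat.succ_pos N) hm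
      have hxmR : (0 : ℝ) < (x m : ℝ) := by exact_mod_cast hxm
      have h1 : 1 / μ (Set.range x) < (x m : ℝ) := by
        refine hN.trans_le ?_
        exact_mod_cast le_trans (Nat.le_succ N) hm
      have h2 : 1 < (x m : ℝ) * μ (Set.range x) := by
        rw [div_lt_iff₀ hpos] at h1
        linarith
      have h3 : 1 / (x m : ℝ) < μ (Set.range x) := by
        rw [div_lt_iff₀ hxmR]
        linarith
      exact absurd (key m hxm) (not_le.mpr h3)
    exact le_antisymm hle (iuqd_nonneg hμ _)
end

section
/- Let d be an integer that is not a perfect square (i.e., d ≠ z² for every z ∈ ℤ). Then there exist a positive integer m and a natural number r with gcd(m, r) = 1 such that, for every prime p with p ≡ r (mod m), d is not a quadratic residue modulo p, i.e., there is no x ∈ ℤ with x² ≡ d (mod p). -/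
/-!
On odd numbers the Jacobi symbol `J(d | ·)` is periodic modulo `4|d|`, so it suffices to find one
odd `b` with `J(d | b) = -1`: every `p ≡ b (mod 4|d|)` then has `J(d | p) = -1`, and `d` is not a
square modulo `p`. If `d` is not a square, either `d = -c²`, and `b = 4c² - 1 ≡ 3 (mod 4)` works,
or `d = ℓ^e w` with `ℓ` prime, `e` odd and `ℓ ∤ w`. In the latter case the Chinese remainder
theorem gives `b ≡ 1 (mod 4|w|)`, so that `J(w | b) = J(w | 1) = 1`, with `J(ℓ | b) = -1`: take
`b ≡ 5 (mod 8)` if `ℓ = 2`, and otherwise `b` a non-residue modulo `ℓ` and use reciprocity.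
-/

open scoped NumberTheorySymbols
open ZMod

theorem Nat.exists_prime_odd_pow_mul_of_not_isSquare {n : ℕ} (hn : n ≠ 0) (h : ¬IsSquare n) :
    ∃ ℓ e w : ℕ, ℓ.Prime ∧ Odd e ∧ ¬ℓ ∣ w ∧ n = ℓ ^ e * w := by
  obtain ⟨t, c, rfl, ht⟩ := Nat.sq_mul_squarefree n
  have ht1 : t ≠ 1 := by rintro rfl; exact h ⟨c, by ring⟩
  obtain ⟨ℓ, hℓ, w, rfl⟩ := Nat.exists_prime_and_dvd ht1
  have hℓw : ¬ℓ ∣ w := fun ⟨v, hv⟩ ↦ hℓ.not_isUnit (ht ℓ ⟨v, by rw [hv, mul_assoc]⟩)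
  have hc : c ≠ 0 := by rintro rfl; simp at hn
  obtain ⟨k, c', hc', rfl⟩ := Nat.exists_eq_pow_mul_and_not_dvd hc ℓ hℓ.ne_one
  exact ⟨ℓ, 2 * k + 1, c' ^ 2 * w, hℓ, odd_two_mul_add_one k,
    hℓ.not_dvd_mul (fun h ↦ hc' (hℓ.dvd_of_dvd_pow h)) hℓw, by ring⟩

theorem Int.exists_prime_odd_pow_mul_of_not_isSquare {d : ℤ} (hd : ¬IsSquare d)
    (hd' : ¬IsSquare (-d)) :
    ∃ (ℓ e : ℕ) (w : ℤ), ℓ.Prime ∧ Odd e ∧ ¬(ℓ : ℤ) ∣ w ∧ d = ℓ ^ e * w := by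
  have hd0 : d.natAbs ≠ 0 := by rintro h; exact hd ⟨0, by simp_all⟩
  have hsq : ¬IsSquare d.natAbs := by
    rintro ⟨c, hc⟩
    rcases Int.natAbs_eq d with h | h
    · exact hd ⟨c, by rw [h, hc]; push_cast; ring⟩
    · exact hd' ⟨c, by rw [h, hc]; push_cast; ring⟩
  obtain ⟨ℓ, e, w, hℓ, he, hℓw, hdw⟩ := Nat.exists_prime_odd_pow_mul_of_not_isSquare hd0 hsq
  have hℓw' : ¬(ℓ : ℤ) ∣ w := by exact_mod_cast hℓw
  rcases Int.natAbs_eq d with h | h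
  · exact ⟨ℓ, e, w, hℓ, he, hℓw', by rw [h, hdw]; push_cast; ring⟩
  · exact ⟨ℓ, e, -w, hℓ, he, by rwa [dvd_neg], by rw [h, hdw]; push_cast; ring⟩

namespace jacobiSym

theorem eq_of_modEq_right {a : ℤ} {b b' : ℕ} (hb : Odd b) (hb' : Odd b')
    (h : b ≡ b' [MOD 4 * a.natAbs]) : J(a | b) = J(a | b') := by
  rw [mod_right a hb, mod_right a hb', h]

theorem coprime_four_mul_natAbs_of_eq_neg_one {a : ℤ} {b : ℕ} (hb : Odd b)
    (h : J(a | b) = -1) : Nat.Coprime (4 * a.natAbs) b := by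
  have hgcd : a.gcd b = 1 := by
    by_contra hne
    have := eq_zero_iff.mpr ⟨hb.pos.ne', hne⟩
    rw [h] at this
    norm_num at this
  exact Nat.Coprime.mul_left (by simpa using (Nat.coprime_two_left.mpr hb).pow_left 2) hgcd

theorem exists_odd_neg_sq_eq_neg_one {c : ℤ} (hc : c ≠ 0) :
    ∃ b : ℕ, Odd b ∧ J(-c ^ 2 | b) = -1 := by
  set b : ℕ := 4 * c.natAbs ^ 2 - 1
  have hc1 : 1 ≤ 4 * c.natAbs ^ 2 := by have := Int.natAbs_pos.mpr hc; nlinarith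
  have hb3 : b % 4 = 3 := by omega
  have hb : Odd b := Nat.odd_iff.mpr (by omega)
  have hcb : c.gcd b = 1 := by
    refine Int.isCoprime_iff_gcd_eq_one.mp ⟨4 * c, -1, ?_⟩
    push_cast [b, hc1]
    rw [sq_abs]
    ring
  exact ⟨b, hb, by rw [jacobiSym.neg _ hb, sq_one' hcb, χ₄_nat_three_mod_four hb3]; norm_num⟩

theorem exists_modEq_one_two_eq_neg_one {M : ℕ} (hM : Odd M) :
    ∃ b : ℕ, b ≡ 1 [MOD 4 * M] ∧ J(2 | b) = -1 := by
  have h8M : Nat.Coprime 8 M := by simpa using (Nat.coprime_two_left.mpr hM).pow_left 3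
  obtain ⟨b, hb8, hbM⟩ := Nat.chineseRemainder h8M 5 1
  have hb8' : b % 8 = 5 := hb8
  have hb4 : b ≡ 1 [MOD 4] := by change b % 4 = 1; omega
  have h4M : Nat.Coprime 4 M := by simpa using (Nat.coprime_two_left.mpr hM).pow_left 2
  refine ⟨b, (Nat.modEq_and_modEq_iff_modEq_mul h4M).mp ⟨hb4, hbM⟩, ?_⟩
  rw [at_two (Nat.odd_iff.mpr (by omega)), χ₈_nat_eq_if_mod_eight]
  simp [hb8', show b % 2 = 1 by omega]

theorem exists_modEq_one_odd_prime_eq_neg_one {q : ℕ} [Fact q.Prime] (hq : q ≠ 2) {M : ℕ}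
    (hM : ¬q ∣ M) : ∃ b : ℕ, b ≡ 1 [MOD 4 * M] ∧ J(q | b) = -1 := by
  obtain ⟨u, hu⟩ := FiniteField.exists_nonsquare (F := ZMod q) (by rwa [ringChar_zmod_n])
  have hq4 : Nat.Coprime q 4 := by
    simpa using (Nat.coprime_two_right.mpr ((Fact.out : q.Prime).odd_of_ne_two hq)).pow_right 2
  have hqM : Nat.Coprime q (4 * M) :=
    hq4.mul_right ((Nat.Prime.coprime_iff_not_dvd Fact.out).mpr hM)
  obtain ⟨b, hbq, hbM⟩ := Nat.chineseRemainder hqM u.val 1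
  have hb4 : b % 4 = 1 := Nat.ModEq.of_mul_right M hbM
  refine ⟨b, hbM, ?_⟩
  rw [quadratic_reciprocity_one_mod_four' ((Fact.out : q.Prime).odd_of_ne_two hq) hb4,
    nonsquare_iff_jacobiSym_eq_neg_one, Int.cast_natCast,
    (natCast_eq_natCast_iff _ _ _).mpr hbq, natCast_zmod_val]
  exact hu

theorem exists_modEq_one_prime_eq_neg_one {ℓ : ℕ} (hℓ : ℓ.Prime) {M : ℕ} (hM : ¬ℓ ∣ M) :
    ∃ b : ℕ, b ≡ 1 [MOD 4 * M] ∧ J(ℓ | b) = -1 := by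
  rcases eq_or_ne ℓ 2 with rfl | hℓ2
  · exact exists_modEq_one_two_eq_neg_one (Nat.odd_iff.mpr (by omega))
  · have : Fact ℓ.Prime := ⟨hℓ⟩
    exact exists_modEq_one_odd_prime_eq_neg_one hℓ2 hM

theorem exists_odd_prime_pow_mul_eq_neg_one {ℓ e : ℕ} (hℓ : ℓ.Prime) (he : Odd e) {w : ℤ}
    (hw : ¬(ℓ : ℤ) ∣ w) : ∃ b : ℕ, Odd b ∧ J(ℓ ^ e * w | b) = -1 := by
  obtain ⟨b, hb1, hJ⟩ :=
    exists_modEq_one_prime_eq_neg_one hℓ (M := w.natAbs) (by rwa [← Int.natCast_dvd])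
  have hb : Odd b := Nat.odd_iff.mpr (by have : b % 4 = 1 := hb1.of_mul_right _; omega)
  refine ⟨b, hb, ?_⟩
  rw [mul_left, pow_left, hJ, he.neg_one_pow, eq_of_modEq_right hb odd_one hb1, one_right]
  norm_num

theorem exists_odd_eq_neg_one_of_not_isSquare {d : ℤ} (hd : ¬IsSquare d) :
    ∃ b : ℕ, Odd b ∧ J(d | b) = -1 := by
  by_cases hd' : IsSquare (-d)
  · obtain ⟨c, hc⟩ := hd'
    have hc0 : c ≠ 0 := by rintro rfl; exact hd ⟨0, by linarith⟩
    rw [show d = -c ^ 2 by linear_combination -hc]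
    exact exists_odd_neg_sq_eq_neg_one hc0
  · obtain ⟨ℓ, e, w, hℓ, he, hw, rfl⟩ := Int.exists_prime_odd_pow_mul_of_not_isSquare hd hd'
    exact exists_odd_prime_pow_mul_eq_neg_one hℓ he hw

end jacobiSym

/-- If d is an integer that is not a perfect square, then there are m ∈ ℕ⁺ and
r ∈ ℕ with gcd(m, r) = 1 such that d is not a quadratic residue modulo any
prime p ≡ r (mod m). -/
theorem exists_progression_of_non_quadratic_residue (d : ℤ)
    (hd : ∀ z : ℤ, d ≠ z ^ 2) :
    ∃ (m : ℕ) (r : ℕ), 0 < m ∧ Nat.gcd m r = 1 ∧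
      ∀ p : ℕ, p.Prime → p ≡ r [MOD m] → ¬ ∃ x : ℤ, x ^ 2 ≡ d [ZMOD (p : ℤ)] := by
  obtain ⟨b, hb, hJ⟩ := jacobiSym.exists_odd_eq_neg_one_of_not_isSquare
    fun ⟨z, hz⟩ ↦ hd z (hz.trans (sq z).symm)
  have hd0 : 0 < d.natAbs := Int.natAbs_pos.mpr (by simpa using hd 0)
  refine ⟨4 * d.natAbs, b, by positivity,
    jacobiSym.coprime_four_mul_natAbs_of_eq_neg_one hb hJ, ?_⟩
  rintro p - hpb ⟨x, hx⟩
  have hm : Even (4 * d.natAbs) := (by decide : Even 4).mul_right _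
  have hp : Odd p := (Odd.mod_even_iff hm).mp (hpb ▸ hb.mod_even hm)
  have hJp : J(d | p) = -1 := (jacobiSym.eq_of_modEq_right hp hb hpb).trans hJ
  refine nonsquare_of_jacobiSym_eq_neg_one hJp ⟨x, ?_⟩
  rw [← (intCast_eq_intCast_iff _ _ _).mpr hx]
  push_cast
  ring
end

section
/- Let a, b, c ∈ ℤ and suppose D := b² − 4ac is a non-zero perfect square (i.e., D = q² for some non-zero integer q). Set X := { a x² + b x y + c y² : x, y ∈ ℤ } ⊆ ℤ. Then μ*(X) > 0 for every upper quasi-density μ* on ℤ. -/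
open Set Filter Topology

lemma muZ_empty (μ : Set ℤ → ℝ) (hμ : IsUpperQuasiDensityZ μ) : μ ∅ = 0 := by
  have h := hμ.2.2.2.1 ∅ 2 (by norm_num)
  simp only [Set.image_empty, Nat.cast_ofNat] at h
  linarith

/-- Any subset of a single residue class mod d has μ-measure at most 1/d. -/
lemma muZ_class (μ : Set ℤ → ℝ) (hμ : IsUpperQuasiDensityZ μ) {d : ℕ} (hd : 0 < d)
    (e : ℕ) {S : Set ℤ} (hS : S ⊆ APZ d e) : μ S ≤ 1 / d := by
  set T : Set ℤ := {m : ℤ | (d : ℤ) * m + (e : ℤ) ∈ S} with hT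
  have himg : (fun x => x + (e : ℤ)) '' ((fun x : ℤ => (d : ℤ) * x) '' T) = S := by
    ext z
    constructor
    · rintro ⟨_, ⟨m, hm, rfl⟩, rfl⟩
      exact hm
    · intro hz
      obtain ⟨m, hm⟩ := hS hz
      exact ⟨(d : ℤ) * m, ⟨m, show (d : ℤ) * m + (e : ℤ) ∈ S by rwa [← hm], rfl⟩, hm.symm⟩
  have h1 := hμ.2.2.2.2 ((fun x : ℤ => (d : ℤ) * x) '' T) e
  have h2 := hμ.2.2.2.1 T d hd
  rw [himg] at h1
  have h3 : μ T ≤ 1 := hμ.2.1 T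
  have hd' : (0 : ℝ) < (d : ℝ) := by exact_mod_cast hd
  rw [h1, h2]
  gcongr

/-- Finite subadditivity of an upper quasi-density on ℤ. -/
lemma muZ_iUnion (μ : Set ℤ → ℝ) (hμ : IsUpperQuasiDensityZ μ) (S : ℕ → Set ℤ) :
    ∀ n : ℕ, μ (⋃ h ∈ Finset.range n, S h) ≤ ∑ h ∈ Finset.range n, μ (S h) := by
  intro n
  induction n with
  | zero => simp [muZ_empty μ hμ]
  | succ n ih =>
    have hset : (⋃ h ∈ Finset.range (n + 1), S h)
        = (⋃ h ∈ Finset.range n, S h) ∪ S n := by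
      rw [Finset.range_add_one]
      simp [Set.biUnion_insert, Set.union_comm]
    rw [hset, Finset.sum_range_succ]
    calc μ ((⋃ h ∈ Finset.range n, S h) ∪ S n)
        ≤ μ (⋃ h ∈ Finset.range n, S h) + μ (S n) := hμ.2.2.1 _ _
      _ ≤ (∑ h ∈ Finset.range n, μ (S h)) + μ (S n) := by linarith

/-- Representation lemma: the value set of the form contains a full arithmetic
progression with non-zero common difference. -/
lemma form_contains_AP (a b c q : ℤ) (hq : q ≠ 0) (hD : b ^ 2 - 4 * a * c = q ^ 2) :
    ∃ m r : ℤ, m ≠ 0 ∧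
      ∀ t : ℤ, ∃ x y : ℤ, m * t + r = a * x ^ 2 + b * x * y + c * y ^ 2 := by
  by_cases ha : a = 0
  · refine ⟨b, c, ?_, fun t => ⟨t, 1, by rw [ha]; ring⟩⟩
    intro hb
    rw [ha, hb] at hD
    have hq2 : q ^ 2 = 0 := by linarith
    exact hq (by nlinarith [sq_nonneg q])
  · exact ⟨2 * a * q, a, mul_ne_zero (mul_ne_zero two_ne_zero ha) hq,
      fun t => ⟨1 + t * (q - b), 2 * a * t, by linear_combination (a * t ^ 2) * hD⟩⟩

/-- If D = b² - 4ac is a non-zero perfect square, then every upper quasi-density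
on ℤ is positive on the set of values of ax² + bxy + cy² over ℤ. -/
theorem pos_density_binary_quadratic_form_int (a b c q : ℤ) (hq : q ≠ 0)
    (hD : b ^ 2 - 4 * a * c = q ^ 2) (μ : Set ℤ → ℝ)
    (hμ : IsUpperQuasiDensityZ μ) :
    0 < μ {n : ℤ | ∃ x y : ℤ, n = a * x ^ 2 + b * x * y + c * y ^ 2} := by
  set X : Set ℤ := {n : ℤ | ∃ x y : ℤ, n = a * x ^ 2 + b * x * y + c * y ^ 2} with hX
  obtain ⟨m, r, hm, hrep⟩ := form_contains_AP a b c q hq hD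
  set d : ℕ := m.natAbs with hdd
  have hd : 0 < d := Int.natAbs_pos.mpr hm
  have hdZ : (0 : ℤ) < (d : ℤ) := by exact_mod_cast hd
  set e : ℕ := (r % (d : ℤ)).toNat with hee
  have hed : ((e : ℤ)) = r % (d : ℤ) :=
    Int.toNat_of_nonneg (Int.emod_nonneg r (by exact_mod_cast hd.ne'))
  -- The full residue class e mod d is contained in X.
  have hAP : APZ d e ⊆ X := by
    rintro z ⟨k, hk⟩
    have hdvd1 : (d : ℤ) ∣ (e : ℤ) - r := by
      refine ⟨-(r / (d : ℤ)), ?_⟩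
      rw [hed, Int.emod_def]
      ring
    obtain ⟨u, hu⟩ := hdvd1
    have hdvd : m ∣ z - r := by
      apply Int.natAbs_dvd.mp
      exact ⟨k + u, by rw [hk]; linarith [hu]⟩
    obtain ⟨t, ht⟩ := hdvd
    have hz : z = m * t + r := by linarith
    rw [hz]
    exact hrep t
  -- X's complement decomposes over residue classes mod d.
  have hXc : Xᶜ = ⋃ h ∈ Finset.range d, (Xᶜ ∩ APZ d h) := by
    ext z
    simp only [Set.mem_iUnion, Finset.mem_range, Set.mem_inter_iff, exists_prop]
    constructor
    · intro hz
      refine ⟨(z % (d : ℤ)).toNat, ?_, hz, ⟨z / (d : ℤ), ?_⟩⟩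
      · have h1 : z % (d : ℤ) < (d : ℤ) := Int.emod_lt_of_pos z hdZ
        have h2 : ((z % (d : ℤ)).toNat : ℤ) = z % (d : ℤ) :=
          Int.toNat_of_nonneg (Int.emod_nonneg z hdZ.ne')
        omega
      · have h2 : ((z % (d : ℤ)).toNat : ℤ) = z % (d : ℤ) :=
          Int.toNat_of_nonneg (Int.emod_nonneg z hdZ.ne')
        rw [h2, Int.emod_def]
        ring
    · rintro ⟨_, _, hz, _⟩
      exact hz
  -- Bound each piece.
  have hpiece : ∀ h ∈ Finset.range d,
      μ (Xᶜ ∩ APZ d h) ≤ (if h = e then 0 else 1 / (d : ℝ)) := by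
    intro h hh
    by_cases he : h = e
    · subst he
      have hempty : Xᶜ ∩ APZ d e = ∅ := by
        rw [Set.eq_empty_iff_forall_notMem]
        rintro z ⟨hz1, hz2⟩
        exact hz1 (hAP hz2)
      rw [hempty, if_pos rfl, muZ_empty μ hμ]
    · rw [if_neg he]
      exact muZ_class μ hμ hd h Set.inter_subset_right
  -- Sum the bounds.
  have hsum : ∑ h ∈ Finset.range d, (if h = e then 0 else 1 / (d : ℝ))
      = 1 - 1 / (d : ℝ) := by
    have he_mem : e ∈ Finset.range d := by
      apply Finset.mem_range.mpr
      have : ((e : ℤ)) < (d : ℤ) := by rw [hed]; exact Int.emod_lt_of_pos r hdZ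
      exact_mod_cast this
    have hd' : (0 : ℝ) < (d : ℝ) := by exact_mod_cast hd
    have : ∀ h ∈ Finset.range d, (if h = e then 0 else 1 / (d : ℝ))
        = 1 / (d : ℝ) - (if h = e then 1 / (d : ℝ) else 0) := by
      intro h _
      by_cases he : h = e <;> simp [he]
    rw [Finset.sum_congr rfl this, Finset.sum_sub_distrib, Finset.sum_ite_eq' _ e,
      if_pos he_mem, Finset.sum_const, Finset.card_range, nsmul_eq_mul]
    field_simp
  have hcompl : μ Xᶜ ≤ 1 - 1 / (d : ℝ) := by
    calc μ Xᶜ = μ (⋃ h ∈ Finset.range d, (Xᶜ ∩ APZ d h)) := by rw [← hXc]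
      _ ≤ ∑ h ∈ Finset.range d, μ (Xᶜ ∩ APZ d h) := muZ_iUnion μ hμ _ d
      _ ≤ ∑ h ∈ Finset.range d, (if h = e then 0 else 1 / (d : ℝ)) :=
          Finset.sum_le_sum hpiece
      _ = 1 - 1 / (d : ℝ) := hsum
  have hunion : (1 : ℝ) ≤ μ X + μ Xᶜ := by
    have hsub := hμ.2.2.1 X Xᶜ
    rw [Set.union_compl_self, hμ.1] at hsub
    exact hsub
  have hd' : (0 : ℝ) < 1 / (d : ℝ) := by positivity
  linarith
end
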